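/- arXiv:2208.10385 — 3 statements merged into one kernel-verified Lean document; each statement's English description precedes it below -/
import Mathlib

section
/- Let G be a compact Hausdorff topological group equipped with its normalized Haar probability measure μ, and let (V, ρ) be an irreducible continuous unitary representation of G. Then for all u, v, w, x ∈ V one has ∫_G conj(⟨u, ρ(g)v⟩) · ⟨w, ρ(g)x⟩ dμ(g) = ⟨w, u⟩ · ⟨v, x⟩ / dim V. In particular, for an orthonormal basis (v_i) of V the matrix coefficients t_{ij}(g) = ⟨v_i, ρ(g)v_j⟩ satisfy ⟨t_{ij}, t_{kl}⟩_{L²(G,μ)} = δ_{ik} δ_{jl} / dim V. -/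
/-!
Averaging the rank-one operator `y ↦ ⟪v, y⟫ • x` over its conjugates `ρ g ∘ _ ∘ ρ g⁻¹` gives
an operator `T` that commutes with every `ρ h` (by left invariance of `μ`) and has the same
trace `⟪v, x⟫`. By Schur's lemma `T` is scalar, so `T = (⟪v, x⟫ / dim V) • 1`; unitarity turns
`⟪w, T u⟫` into the integral of `conj ⟪u, ρ g v⟫ * ⟪w, ρ g x⟫`.
-/

open MeasureTheory InnerProductSpace

theorem LinearMap.trace_integral {X V : Type*} [MeasurableSpace X] {μ : Measure X}
    [NormedAddCommGroup V] [NormedSpace ℂ V] [FiniteDimensional ℂ V] {F : X → V →L[ℂ] V}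
    (hF : Integrable F μ) :
    LinearMap.trace ℂ V ((∫ x, F x ∂μ : V →L[ℂ] V) : V →ₗ[ℂ] V) =
      ∫ x, LinearMap.trace ℂ V (F x) ∂μ :=
  (LinearMap.toContinuousLinearMap
    (LinearMap.trace ℂ V ∘ₗ ContinuousLinearMap.coeLM ℂ)).integral_comp_comm hF |>.symm

section Schur

variable {K V G : Type*} [Field K] [IsAlgClosed K] [AddCommGroup V] [Module K V]
  [FiniteDimensional K V] [Nontrivial V] [Monoid G]

theorem exists_eq_smul_one_of_forall_commute (ρ : G →* Module.End K V)
    (hρ_irr : ∀ U : Submodule K V, (∀ (g : G) (v : V), v ∈ U → ρ g v ∈ U) → U = ⊥ ∨ U = ⊤)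
    (T : Module.End K V) (hT : ∀ g, Commute (ρ g) T) : ∃ c : K, T = c • 1 := by
  obtain ⟨c, hc⟩ := Module.End.exists_eigenvalue T
  have hinv : ∀ (g : G) (v : V), v ∈ T.eigenspace c → ρ g v ∈ T.eigenspace c := by
    intro g v hv
    rw [Module.End.mem_eigenspace_iff] at hv ⊢
    rw [← Module.End.mul_apply, ← (hT g).eq, Module.End.mul_apply, hv, map_smul]
  refine ⟨c, LinearMap.ext fun v => ?_⟩
  have hv : v ∈ T.eigenspace c := by
    rw [(hρ_irr _ hinv).resolve_left hc]
    trivial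
  exact Module.End.mem_eigenspace_iff.mp hv

end Schur

section Average

variable {V G : Type*} [NormedAddCommGroup V] [NormedSpace ℂ V]
  [FiniteDimensional ℂ V] [Group G] [TopologicalSpace G] [MeasurableSpace G]

noncomputable def conjAverage (μ : Measure G) (ρ : G →* (V →L[ℂ] V)) (A : V →L[ℂ] V) :
    V →L[ℂ] V :=
  ∫ g, ρ g * A * ρ g⁻¹ ∂μ

variable (μ : Measure G) (ρ : G →* (V →L[ℂ] V))

omit [MeasurableSpace G] in
theorem continuous_conjugate [IsTopologicalGroup G] (hρ : ∀ v, Continuous fun g => ρ g v)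
    (A : V →L[ℂ] V) : Continuous fun g => ρ g * A * ρ g⁻¹ := by
  have hc : Continuous fun g => ρ g := continuous_clm_apply.2 hρ
  exact (hc.mul continuous_const).mul (hc.comp continuous_inv)

theorem integrable_conjugate [IsTopologicalGroup G] [CompactSpace G] [OpensMeasurableSpace G]
    [IsFiniteMeasure μ] (hρ : ∀ v, Continuous fun g => ρ g v) (A : V →L[ℂ] V) :
    Integrable (fun g => ρ g * A * ρ g⁻¹) μ :=
  (continuous_conjugate ρ hρ A).integrable_of_hasCompactSupport (.of_compactSpace _)

theorem commute_conjAverage [IsTopologicalGroup G] [CompactSpace G] [OpensMeasurableSpace G]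
    [MeasurableMul G] [IsFiniteMeasure μ] [μ.IsMulLeftInvariant]
    (hρ : ∀ v, Continuous fun g => ρ g v) (A : V →L[ℂ] V) (h : G) :
    Commute (ρ h) (conjAverage μ ρ A) := by
  have hshift : ∀ g, ρ h * (ρ g * A * ρ g⁻¹) = ρ (h * g) * A * ρ (h * g)⁻¹ * ρ h := by
    intro g
    have : ρ h⁻¹ * ρ h = 1 := by rw [← map_mul, inv_mul_cancel, map_one]
    simp only [mul_inv_rev, map_mul, mul_assoc, this, mul_one]
  calc ρ h * conjAverage μ ρ A = ∫ g, ρ (h * g) * A * ρ (h * g)⁻¹ * ρ h ∂μ := by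
        simp only [conjAverage, ← hshift,
          integral_const_mul_of_integrable (integrable_conjugate μ ρ hρ A)]
    _ = conjAverage μ ρ A * ρ h := by
        rw [integral_mul_left_eq_self (fun g => ρ g * A * ρ g⁻¹ * ρ h),
          integral_mul_const_of_integrable (integrable_conjugate μ ρ hρ A), conjAverage]

theorem trace_conjAverage [IsTopologicalGroup G] [CompactSpace G] [OpensMeasurableSpace G]
    [IsProbabilityMeasure μ] (hρ : ∀ v, Continuous fun g => ρ g v) (A : V →L[ℂ] V) :
    LinearMap.trace ℂ V (conjAverage μ ρ A) = LinearMap.trace ℂ V A := by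
  have htr : ∀ g, LinearMap.trace ℂ V (ρ g * A * ρ g⁻¹ : V →L[ℂ] V) = LinearMap.trace ℂ V A := by
    intro g
    rw [ContinuousLinearMap.toLinearMap_mul, LinearMap.trace_mul_comm,
      ← ContinuousLinearMap.toLinearMap_mul, ← mul_assoc, ← map_mul, inv_mul_cancel, map_one,
      one_mul]
  rw [conjAverage, LinearMap.trace_integral (integrable_conjugate μ ρ hρ A)]
  simp only [htr, integral_const, probReal_univ, one_smul]

end Average

section Unitary

variable {V G : Type*} [NormedAddCommGroup V] [InnerProductSpace ℂ V] [FiniteDimensional ℂ V]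
  [Group G] [TopologicalSpace G] [IsTopologicalGroup G] [CompactSpace G]
  [MeasurableSpace G] [OpensMeasurableSpace G]

theorem inner_conjAverage_rankOne_apply (μ : Measure G) [IsFiniteMeasure μ]
    (ρ : G →* (V →L[ℂ] V)) (hρ_unit : ∀ (g : G) (u v : V), inner ℂ (ρ g u) (ρ g v) = inner ℂ u v)
    (hρ : ∀ v, Continuous fun g => ρ g v) (u v w x : V) :
    inner ℂ w (conjAverage μ ρ (rankOne ℂ x v) u) =
      ∫ g, (starRingEnd ℂ) (inner ℂ u (ρ g v)) * inner ℂ w (ρ g x) ∂μ := by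
  have hcoeff : ∀ g, inner ℂ v (ρ g⁻¹ u) = (starRingEnd ℂ) (inner ℂ u (ρ g v)) := by
    intro g
    rw [← hρ_unit g, ← mul_apply_eq_comp, ← map_mul, mul_inv_cancel, map_one,
      one_apply_eq_self, inner_conj_symm]
  have hF_u := (integrable_conjugate μ ρ hρ (rankOne ℂ x v)).apply_continuousLinearMap u
  rw [conjAverage, ContinuousLinearMap.integral_apply (integrable_conjugate μ ρ hρ _),
    ← integral_inner hF_u]
  congr 1 with g
  simp [hcoeff, inner_smul_right]

end Unitary

theorem schur_orthogonality_same_general {G : Type*} [Group G] [TopologicalSpace G]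
    [IsTopologicalGroup G] [CompactSpace G]
    [MeasurableSpace G] [BorelSpace G]
    (μ : Measure G) [μ.IsHaarMeasure] [IsProbabilityMeasure μ]
    {V : Type*} [NormedAddCommGroup V] [InnerProductSpace ℂ V]
    [FiniteDimensional ℂ V] [Nontrivial V]
    (ρ : G →* (V →ₗ[ℂ] V))
    (hρ_unit : ∀ (g : G) (u v : V), (inner ℂ (ρ g u) (ρ g v) : ℂ) = inner ℂ u v)
    (hρ_cont : ∀ v : V, Continuous fun g : G => ρ g v)
    (hρ_irr : ∀ U : Submodule ℂ V,
      (∀ (g : G) (v : V), v ∈ U → ρ g v ∈ U) → U = ⊥ ∨ U = ⊤)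
    (u v w x : V) :
    ∫ g, (starRingEnd ℂ) ((inner ℂ u (ρ g v) : ℂ)) * (inner ℂ w (ρ g x) : ℂ) ∂μ
      = (inner ℂ w u : ℂ) * (inner ℂ v x : ℂ) / (Module.finrank ℂ V : ℂ) := by
  let ρL : G →* (V →L[ℂ] V) := (Module.End.toContinuousLinearMap V).toMonoidHom.comp ρ
  let T := conjAverage μ ρL (rankOne ℂ x v)
  obtain ⟨c, hc⟩ : ∃ c : ℂ, (T : V →ₗ[ℂ] V) = c • 1 :=
    exists_eq_smul_one_of_forall_commute ρ hρ_irr T fun g =>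
      (commute_conjAverage μ ρL hρ_cont _ g).map ContinuousLinearMap.toLinearMapRingHom
  have hc_trace : c * Module.finrank ℂ V = inner ℂ v x := by
    have := trace_conjAverage μ ρL hρ_cont (rankOne ℂ x v)
    rwa [hc, trace_rankOne, map_smul, LinearMap.trace_one, smul_eq_mul] at this
  have hn : (Module.finrank ℂ V : ℂ) ≠ 0 := Nat.cast_ne_zero.2 Module.finrank_pos.ne'
  calc _ = inner ℂ w (T u) := (inner_conjAverage_rankOne_apply μ ρL hρ_unit hρ_cont u v w x).symm
    _ = _ := by
      rw [← ContinuousLinearMap.coe_coe, hc, eq_div_iff hn, ← hc_trace, LinearMap.smul_apply,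
        Module.End.one_apply, inner_smul_right]
      ring

/-- **Schur orthogonality (same irreducible representation).**
For a compact Hausdorff topological group `G` with normalized Haar probability
measure `μ` and an irreducible continuous unitary representation `ρ` of `G` on a
nonzero finite-dimensional complex inner product space `V`, the matrix
coefficients satisfy
`∫ conj ⟨u, ρ(g) v⟩ · ⟨w, ρ(g) x⟩ dμ(g) = ⟨w, u⟩ ⟨v, x⟩ / dim V`. -/
theorem schur_orthogonality_same {G : Type*} [Group G] [TopologicalSpace G]
    [IsTopologicalGroup G] [CompactSpace G] [T2Space G]
    [MeasurableSpace G] [BorelSpace G]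
    (μ : Measure G) [μ.IsHaarMeasure] [IsProbabilityMeasure μ]
    {V : Type*} [NormedAddCommGroup V] [InnerProductSpace ℂ V]
    [FiniteDimensional ℂ V] [Nontrivial V]
    (ρ : G →* (V →ₗ[ℂ] V))
    (hρ_unit : ∀ (g : G) (u v : V), (inner ℂ (ρ g u) (ρ g v) : ℂ) = inner ℂ u v)
    (hρ_cont : ∀ v : V, Continuous fun g : G => ρ g v)
    (hρ_irr : ∀ U : Submodule ℂ V,
      (∀ (g : G) (v : V), v ∈ U → ρ g v ∈ U) → U = ⊥ ∨ U = ⊤)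
    (u v w x : V) :
    ∫ g, (starRingEnd ℂ) ((inner ℂ u (ρ g v) : ℂ)) * (inner ℂ w (ρ g x) : ℂ) ∂μ
      = (inner ℂ w u : ℂ) * (inner ℂ v x : ℂ) / (Module.finrank ℂ V : ℂ) :=
  schur_orthogonality_same_general μ ρ hρ_unit hρ_cont hρ_irr u v w x
end

section
/- Let G be a compact Hausdorff topological group equipped with its normalized Haar probability measure μ, and let (V, ρ_V) and (W, ρ_W) be irreducible continuous unitary representations of G that are not isomorphic. Then for all u, v ∈ V and w, x ∈ W one has ∫_G conj(⟨u, ρ_V(g)v⟩) · ⟨w, ρ_W(g)x⟩ dμ(g) = 0. -/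
/-!
Average the rank-one operator `z ↦ ⟪v, z⟫ • x` over `G`, conjugating by `ρW g` and `ρV g⁻¹`.
Left invariance of Haar measure makes the average `T` an intertwiner, so `T = 0` by Schur's lemma.
By unitarity of `ρV`, `⟪w, T u⟫` is the integral of the product of matrix coefficients.
-/

open MeasureTheory

namespace Representation

section Schur

variable {k G V W : Type*} [Field k] [Monoid G] [AddCommGroup V] [Module k V]
  [AddCommGroup W] [Module k W]

theorem isIrreducible_of_forall_eq_bot_or_eq_top [Nontrivial V] {ρ : Representation k G V}
    (h : ∀ U : Submodule k V, (∀ (g : G) (v : V), v ∈ U → ρ g v ∈ U) → U = ⊥ ∨ U = ⊤) :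
    ρ.IsIrreducible where
  exists_pair_ne := ⟨⊥, ⊤, fun h => bot_ne_top (congrArg Subrepresentation.toSubmodule h)⟩
  eq_bot_or_eq_top U := (h U.toSubmodule U.apply_mem_toSubmodule).imp
    (fun hU => Subrepresentation.toSubmodule_injective hU)
    (fun hU => Subrepresentation.toSubmodule_injective hU)

theorem isEmpty_equiv {ρ : Representation k G V} {σ : Representation k G W}
    (h : ¬ ∃ T : V ≃ₗ[k] W, ∀ (g : G) (v : V), T (ρ g v) = σ g (T v)) :
    IsEmpty (ρ.Equiv σ) :=
  ⟨fun φ => h ⟨φ.toLinearEquiv, φ.isIntertwining⟩⟩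

end Schur

section Average

variable {G 𝕜 V W : Type*} [Group G] [MeasurableSpace G] [RCLike 𝕜]
  [NormedAddCommGroup V] [NormedSpace 𝕜 V] [FiniteDimensional 𝕜 V]
  [NormedAddCommGroup W] [NormedSpace 𝕜 W] [FiniteDimensional 𝕜 W]

section Integrable

variable [TopologicalSpace G] [ContinuousInv G] [CompactSpace G] [OpensMeasurableSpace G]
  {μ : Measure G} [IsFiniteMeasureOnCompacts μ] {ρ : Representation 𝕜 G V}
  {σ : Representation 𝕜 G W}

theorem integrable_conj (hρ : ∀ v, Continuous fun g => ρ g v)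
    (hσ : ∀ w, Continuous fun g => σ g w) (A : V →L[𝕜] W) :
    Integrable (fun g => LinearMap.toContinuousLinearMap (σ g) ∘L A ∘L
      LinearMap.toContinuousLinearMap (ρ g⁻¹)) μ := by
  have hρ' : Continuous fun g => LinearMap.toContinuousLinearMap (ρ g) :=
    continuous_clm_apply.mpr hρ
  have hσ' : Continuous fun g => LinearMap.toContinuousLinearMap (σ g) :=
    continuous_clm_apply.mpr hσ
  exact (hσ'.clm_comp (continuous_const.clm_comp (hρ'.comp continuous_inv)))
    |>.integrable_of_hasCompactSupport (.of_compactSpace _)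

theorem integrable_conj_apply (hρ : ∀ v, Continuous fun g => ρ g v)
    (hσ : ∀ w, Continuous fun g => σ g w) (A : V →L[𝕜] W) (v : V) :
    Integrable (fun g => σ g (A (ρ g⁻¹ v))) μ :=
  (integrable_conj hρ hσ A).apply_continuousLinearMap v

end Integrable

variable [NormedSpace ℝ W] [IsScalarTower ℝ 𝕜 W]

variable (μ : Measure G) in
noncomputable def conjAverage (ρ : Representation 𝕜 G V) (σ : Representation 𝕜 G W)
    (A : V →L[𝕜] W) : V →L[𝕜] W :=
  ∫ g, LinearMap.toContinuousLinearMap (σ g) ∘L A ∘L LinearMap.toContinuousLinearMap (ρ g⁻¹) ∂μ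

variable [TopologicalSpace G] [IsTopologicalGroup G] [CompactSpace G] [BorelSpace G]
  {μ : Measure G} [μ.IsHaarMeasure] {ρ : Representation 𝕜 G V} {σ : Representation 𝕜 G W}

theorem conjAverage_apply (hρ : ∀ v, Continuous fun g => ρ g v)
    (hσ : ∀ w, Continuous fun g => σ g w) (A : V →L[𝕜] W) (v : V) :
    conjAverage μ ρ σ A v = ∫ g, σ g (A (ρ g⁻¹ v)) ∂μ :=
  ContinuousLinearMap.integral_apply (integrable_conj hρ hσ A) v

theorem conjAverage_isIntertwining (hρ : ∀ v, Continuous fun g => ρ g v)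
    (hσ : ∀ w, Continuous fun g => σ g w) (A : V →L[𝕜] W) (h : G) (v : V) :
    conjAverage μ ρ σ A (ρ h v) = σ h (conjAverage μ ρ σ A v) := by
  have := FiniteDimensional.complete 𝕜 W
  calc conjAverage μ ρ σ A (ρ h v) = ∫ g, σ (h * g) (A (ρ (h * g)⁻¹ (ρ h v))) ∂μ := by
        rw [conjAverage_apply hρ hσ, ← integral_mul_left_eq_self _ h]
    _ = ∫ g, σ h (σ g (A (ρ g⁻¹ v))) ∂μ := by
        simp [mul_inv_rev, map_mul, Module.End.mul_apply]
    _ = σ h (conjAverage μ ρ σ A v) := by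
        rw [conjAverage_apply hρ hσ]
        exact (LinearMap.toContinuousLinearMap (σ h)).integral_comp_comm
          (integrable_conj_apply hρ hσ A v)

end Average

section Unitary

variable {G 𝕜 V W : Type*} [Group G] [MeasurableSpace G] [RCLike 𝕜]
  [NormedAddCommGroup V] [InnerProductSpace 𝕜 V] [FiniteDimensional 𝕜 V]
  [NormedAddCommGroup W] [InnerProductSpace 𝕜 W] [FiniteDimensional 𝕜 W]
  [NormedSpace ℝ W] [IsScalarTower ℝ 𝕜 W]
  [TopologicalSpace G] [IsTopologicalGroup G] [CompactSpace G] [BorelSpace G]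
  {μ : Measure G} [μ.IsHaarMeasure] {ρ : Representation 𝕜 G V} {σ : Representation 𝕜 G W}

theorem inner_conjAverage_rankOne
    (hρ_unit : ∀ (g : G) (u v : V), inner 𝕜 (ρ g u) (ρ g v) = inner 𝕜 u v)
    (hρ : ∀ v, Continuous fun g => ρ g v) (hσ : ∀ w, Continuous fun g => σ g w)
    (u v : V) (w x : W) :
    inner 𝕜 w (conjAverage μ ρ σ (InnerProductSpace.rankOne 𝕜 x v) u) =
      ∫ g, starRingEnd 𝕜 (inner 𝕜 u (ρ g v)) * inner 𝕜 w (σ g x) ∂μ := by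
  have := FiniteDimensional.complete 𝕜 W
  have hinv (g : G) : inner 𝕜 v (ρ g⁻¹ u) = starRingEnd 𝕜 (inner 𝕜 u (ρ g v)) := by
    rw [← hρ_unit g, ← Module.End.mul_apply, ← map_mul, mul_inv_cancel, map_one,
      Module.End.one_apply, inner_conj_symm]
  rw [conjAverage_apply hρ hσ, ← integral_inner (integrable_conj_apply hρ hσ _ u)]
  simp [InnerProductSpace.rankOne_apply, inner_smul_right, hinv]

end Unitary

end Representation

theorem schur_orthogonality_distinct_general {G : Type*} [Group G] [TopologicalSpace G]
    [IsTopologicalGroup G] [CompactSpace G]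
    [MeasurableSpace G] [BorelSpace G]
    (μ : Measure G) [μ.IsHaarMeasure]
    {V : Type*} [NormedAddCommGroup V] [InnerProductSpace ℂ V]
    [FiniteDimensional ℂ V] [Nontrivial V]
    {W : Type*} [NormedAddCommGroup W] [InnerProductSpace ℂ W]
    [FiniteDimensional ℂ W] [Nontrivial W]
    (ρV : G →* (V →ₗ[ℂ] V)) (ρW : G →* (W →ₗ[ℂ] W))
    (hV_unit : ∀ (g : G) (u v : V), (inner ℂ (ρV g u) (ρV g v) : ℂ) = inner ℂ u v)
    (hV_cont : ∀ v : V, Continuous fun g : G => ρV g v)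
    (hV_irr : ∀ U : Submodule ℂ V,
      (∀ (g : G) (v : V), v ∈ U → ρV g v ∈ U) → U = ⊥ ∨ U = ⊤)
    (hW_cont : ∀ w : W, Continuous fun g : G => ρW g w)
    (hW_irr : ∀ U : Submodule ℂ W,
      (∀ (g : G) (w : W), w ∈ U → ρW g w ∈ U) → U = ⊥ ∨ U = ⊤)
    (hniso : ¬ ∃ T : V ≃ₗ[ℂ] W, ∀ (g : G) (v : V), T (ρV g v) = ρW g (T v))
    (u v : V) (w x : W) :
    ∫ g, (starRingEnd ℂ) ((inner ℂ u (ρV g v) : ℂ)) * (inner ℂ w (ρW g x) : ℂ) ∂μ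
      = 0 := by
  have := Representation.isIrreducible_of_forall_eq_bot_or_eq_top hV_irr
  have := Representation.isIrreducible_of_forall_eq_bot_or_eq_top hW_irr
  have := Representation.isEmpty_equiv hniso
  let T : Representation.IntertwiningMap ρV ρW :=
    LinearMap.intertwiningMap_of_isIntertwiningMap ρV ρW
      (Representation.conjAverage μ ρV ρW (InnerProductSpace.rankOne ℂ x v))
      (Representation.conjAverage_isIntertwining hV_cont hW_cont _)
  have hT : T u = 0 := by rw [Subsingleton.elim T 0]; rfl
  rw [← Representation.inner_conjAverage_rankOne hV_unit hV_cont hW_cont]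
  exact (congrArg (inner ℂ w) hT).trans (inner_zero_right w)

/-- **Schur orthogonality (distinct irreducible representations).**
Matrix coefficients of non-isomorphic irreducible continuous unitary
representations of a compact Hausdorff group are orthogonal in `L²(G, μ)`. -/
theorem schur_orthogonality_distinct {G : Type*} [Group G] [TopologicalSpace G]
    [IsTopologicalGroup G] [CompactSpace G] [T2Space G]
    [MeasurableSpace G] [BorelSpace G]
    (μ : Measure G) [μ.IsHaarMeasure] [IsProbabilityMeasure μ]
    {V : Type*} [NormedAddCommGroup V] [InnerProductSpace ℂ V]
    [FiniteDimensional ℂ V] [Nontrivial V]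
    {W : Type*} [NormedAddCommGroup W] [InnerProductSpace ℂ W]
    [FiniteDimensional ℂ W] [Nontrivial W]
    (ρV : G →* (V →ₗ[ℂ] V)) (ρW : G →* (W →ₗ[ℂ] W))
    (hV_unit : ∀ (g : G) (u v : V), (inner ℂ (ρV g u) (ρV g v) : ℂ) = inner ℂ u v)
    (hV_cont : ∀ v : V, Continuous fun g : G => ρV g v)
    (hV_irr : ∀ U : Submodule ℂ V,
      (∀ (g : G) (v : V), v ∈ U → ρV g v ∈ U) → U = ⊥ ∨ U = ⊤)
    (hW_unit : ∀ (g : G) (u v : W), (inner ℂ (ρW g u) (ρW g v) : ℂ) = inner ℂ u v)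
    (hW_cont : ∀ w : W, Continuous fun g : G => ρW g w)
    (hW_irr : ∀ U : Submodule ℂ W,
      (∀ (g : G) (w : W), w ∈ U → ρW g w ∈ U) → U = ⊥ ∨ U = ⊤)
    (hniso : ¬ ∃ T : V ≃ₗ[ℂ] W, ∀ (g : G) (v : V), T (ρV g v) = ρW g (T v))
    (u v : V) (w x : W) :
    ∫ g, (starRingEnd ℂ) ((inner ℂ u (ρV g v) : ℂ)) * (inner ℂ w (ρW g x) : ℂ) ∂μ
      = 0 :=
  schur_orthogonality_distinct_general μ ρV ρW hV_unit hV_cont hV_irr hW_cont hW_irr hniso u v w x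
end

section
/- Let G be a compact Hausdorff topological group equipped with its normalized Haar probability measure μ, and let (V, ρ) be an irreducible continuous unitary representation of G. Then for all u, v, w, x ∈ V and all g ∈ G one has ∫_G ⟨u, ρ(g h)v⟩ · ⟨w, ρ(h⁻¹)x⟩ dμ(h) = ⟨w, v⟩ · ⟨u, ρ(g)x⟩ / dim V. In particular, for an orthonormal basis (v_i) of V the matrix coefficients t_{ij}(g) = ⟨v_i, ρ(g)v_j⟩ satisfy t_{ij} ∗ t_{kl} = δ_{jk} · t_{il} / dim V. -/
/-!
Averaging an operator `A` over the group, `∫ ρ(h) A ρ(h)⁻¹ dμ(h)`, produces an operator that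
commutes with every `ρ(g)` (by left invariance of `μ`) and has the same trace as `A`. By Schur's
lemma it is therefore `tr A / dim V` times the identity. For the rank-one operator
`y ↦ ⟨w, y⟩ v` the convolution integral is the functional `B ↦ ⟨u, ρ(g) (B x)⟩` applied to
this average, and `tr A = ⟨w, v⟩`.
-/

open MeasureTheory

namespace Representation

section Field

variable {k G V : Type*} [Field k] [Monoid G] [AddCommGroup V] [Module k V]

theorem isIrreducible_of_invariant_eq_bot_or_top [Nontrivial V] (ρ : Representation k G V)
    (hρ : ∀ U : Submodule k V, (∀ (g : G) (v : V), v ∈ U → ρ g v ∈ U) → U = ⊥ ∨ U = ⊤) :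
    ρ.IsIrreducible where
  exists_pair_ne := ⟨⊥, ⊤, fun h => bot_ne_top (congrArg Subrepresentation.toSubmodule h)⟩
  eq_bot_or_eq_top W := (hρ W.toSubmodule W.apply_mem_toSubmodule).imp
    (fun h => Subrepresentation.toSubmodule_injective h)
    (fun h => Subrepresentation.toSubmodule_injective h)

namespace IsIrreducible

theorem nontrivial (ρ : Representation k G V) [ρ.IsIrreducible] : Nontrivial V := by
  by_contra h
  rw [not_nontrivial_iff_subsingleton] at h
  exact (bot_ne_top : (⊥ : Subrepresentation ρ) ≠ ⊤)
    (Subrepresentation.toSubmodule_injective (Subsingleton.elim _ _))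

theorem exists_eq_smul_one [FiniteDimensional k V] [IsAlgClosed k] (ρ : Representation k G V)
    [ρ.IsIrreducible] (T : Module.End k V)
    (hT : ∀ g v, T (ρ g v) = ρ g (T v)) : ∃ c : k, T = c • 1 := by
  obtain ⟨c, hc⟩ := algebraMap_intertwiningMap_bijective_of_isAlgClosed.2
    (T.intertwiningMap_of_isIntertwiningMap ρ ρ hT)
  exact ⟨c, (congrArg IntertwiningMap.toLinearMap hc).symm⟩

end IsIrreducible

end Field

variable {G V : Type*} [Group G] [NormedAddCommGroup V] [NormedSpace ℂ V] [FiniteDimensional ℂ V]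
  (ρ : Representation ℂ G V)

noncomputable def toCLM : G →* (V →L[ℂ] V) :=
  (Module.End.toContinuousLinearMap V).toMonoidHom.comp ρ

@[simp]
theorem toCLM_apply (g : G) (v : V) : ρ.toCLM g v = ρ g v := rfl

theorem continuous_toCLM [TopologicalSpace G] (hρ : ∀ v : V, Continuous fun g => ρ g v) :
    Continuous ρ.toCLM :=
  continuous_clm_apply.2 hρ

noncomputable def conj (A : V →L[ℂ] V) (h : G) : V →L[ℂ] V := ρ.toCLM h * A * ρ.toCLM h⁻¹

theorem toCLM_mul_conj (A : V →L[ℂ] V) (g h : G) :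
    ρ.toCLM g * ρ.conj A h = ρ.conj A (g * h) * ρ.toCLM g := by
  simp only [conj, mul_inv_rev, map_mul, mul_assoc, ← map_mul ρ.toCLM g⁻¹ g, inv_mul_cancel,
    map_one, mul_one]

theorem trace_conj (A : V →L[ℂ] V) (h : G) :
    LinearMap.trace ℂ V (ρ.conj A h) = LinearMap.trace ℂ V A := by
  rw [conj, ContinuousLinearMap.toLinearMap_mul, LinearMap.trace_mul_comm,
    ← ContinuousLinearMap.toLinearMap_mul, ← mul_assoc, ← map_mul, inv_mul_cancel, map_one,
    one_mul]

variable [TopologicalSpace G] [MeasurableSpace G]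

noncomputable def haarAverage (μ : Measure G) (A : V →L[ℂ] V) : V →L[ℂ] V :=
  ∫ h, ρ.conj A h ∂μ

variable {ρ} [IsTopologicalGroup G] [CompactSpace G] (μ : Measure G)

theorem integrable_conj_s4 [OpensMeasurableSpace G] [IsFiniteMeasure μ]
    (hρ : ∀ v : V, Continuous fun g => ρ g v) (A : V →L[ℂ] V) :
    Integrable (ρ.conj A) μ :=
  have hc := ρ.continuous_toCLM hρ
  ((hc.mul continuous_const).mul (hc.comp continuous_inv)).integrable_of_hasCompactSupport
    (.of_compactSpace _)

theorem toCLM_mul_haarAverage [BorelSpace G] [IsFiniteMeasure μ] [μ.IsMulLeftInvariant]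
    (hρ : ∀ v : V, Continuous fun g => ρ g v) (A : V →L[ℂ] V) (g : G) :
    ρ.toCLM g * ρ.haarAverage μ A = ρ.haarAverage μ A * ρ.toCLM g := by
  have hint := integrable_conj_s4 μ hρ A
  calc ρ.toCLM g * ρ.haarAverage μ A = ∫ h, ρ.toCLM g * ρ.conj A h ∂μ :=
        (ContinuousLinearMap.integral_comp_comm (.mul ℂ _ (ρ.toCLM g)) hint).symm
    _ = ∫ h, ρ.conj A (g * h) * ρ.toCLM g ∂μ := by simp_rw [toCLM_mul_conj]
    _ = ∫ h, ρ.conj A h * ρ.toCLM g ∂μ := integral_mul_left_eq_self (ρ.conj A · * ρ.toCLM g) g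
    _ = ρ.haarAverage μ A * ρ.toCLM g :=
        ContinuousLinearMap.integral_comp_comm ((ContinuousLinearMap.mul ℂ _).flip (ρ.toCLM g)) hint

theorem trace_haarAverage [OpensMeasurableSpace G] [IsProbabilityMeasure μ]
    (hρ : ∀ v : V, Continuous fun g => ρ g v) (A : V →L[ℂ] V) :
    LinearMap.trace ℂ V (ρ.haarAverage μ A) = LinearMap.trace ℂ V A := by
  let trace : (V →L[ℂ] V) →L[ℂ] ℂ := LinearMap.toContinuousLinearMap
    (LinearMap.trace ℂ V ∘ₗ (Module.End.toContinuousLinearMap V).symm.toLinearMap)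
  calc trace (ρ.haarAverage μ A) = ∫ h, trace (ρ.conj A h) ∂μ :=
        (ContinuousLinearMap.integral_comp_comm trace (integrable_conj_s4 μ hρ A)).symm
    _ = ∫ h, LinearMap.trace ℂ V (ρ.conj A h) ∂μ := rfl
    _ = LinearMap.trace ℂ V A := by simp [trace_conj]

theorem haarAverage_eq_smul_one [BorelSpace G] [IsProbabilityMeasure μ] [μ.IsMulLeftInvariant]
    [ρ.IsIrreducible] (hρ : ∀ v : V, Continuous fun g => ρ g v) (A : V →L[ℂ] V) :
    ρ.haarAverage μ A = (LinearMap.trace ℂ V A / Module.finrank ℂ V) • 1 := by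
  have := IsIrreducible.nontrivial ρ
  obtain ⟨c, hc⟩ := IsIrreducible.exists_eq_smul_one ρ (ρ.haarAverage μ A)
    fun g v => (congr($(toCLM_mul_haarAverage μ hρ A g) v)).symm
  have hn : (Module.finrank ℂ V : ℂ) ≠ 0 := Nat.cast_ne_zero.2 Module.finrank_pos.ne'
  have htrace : LinearMap.trace ℂ V A = c * Module.finrank ℂ V := by
    rw [← trace_haarAverage μ hρ A, hc, map_smul, LinearMap.trace_one, smul_eq_mul]
  ext v
  simpa [htrace, hn] using congr($hc v)

end Representation

theorem matrix_coeff_convolution_same_general {G : Type*} [Group G] [TopologicalSpace G]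
    [IsTopologicalGroup G] [CompactSpace G]
    [MeasurableSpace G] [BorelSpace G]
    (μ : Measure G) [μ.IsHaarMeasure] [IsProbabilityMeasure μ]
    {V : Type*} [NormedAddCommGroup V] [InnerProductSpace ℂ V]
    [FiniteDimensional ℂ V] [Nontrivial V]
    (ρ : G →* (V →ₗ[ℂ] V))
    (hρ_cont : ∀ v : V, Continuous fun g : G => ρ g v)
    (hρ_irr : ∀ U : Submodule ℂ V,
      (∀ (g : G) (v : V), v ∈ U → ρ g v ∈ U) → U = ⊥ ∨ U = ⊤)
    (u v w x : V) (g : G) :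
    ∫ h, (inner ℂ u (ρ (g * h) v) : ℂ) * (inner ℂ w (ρ h⁻¹ x) : ℂ) ∂μ
      = (inner ℂ w v : ℂ) * (inner ℂ u (ρ g x) : ℂ) / (Module.finrank ℂ V : ℂ) := by
  have := Representation.isIrreducible_of_invariant_eq_bot_or_top ρ hρ_irr
  let A := InnerProductSpace.rankOne ℂ v w
  let coeff : (V →L[ℂ] V) →L[ℂ] ℂ := innerSL ℂ u ∘L Representation.toCLM ρ g ∘L .apply ℂ V x
  calc ∫ h, (inner ℂ u (ρ (g * h) v) : ℂ) * (inner ℂ w (ρ h⁻¹ x) : ℂ) ∂μ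
      = ∫ h, coeff (Representation.conj ρ A h) ∂μ := by
        congr 1 with h
        simp [coeff, A, Representation.conj, mul_comm]
    _ = coeff (Representation.haarAverage ρ μ A) :=
        ContinuousLinearMap.integral_comp_comm coeff (Representation.integrable_conj_s4 μ hρ_cont A)
    _ = (inner ℂ w v : ℂ) * (inner ℂ u (ρ g x) : ℂ) / (Module.finrank ℂ V : ℂ) := by
        simp only [coeff, A, Representation.haarAverage_eq_smul_one μ hρ_cont,
          InnerProductSpace.trace_rankOne, ContinuousLinearMap.comp_apply,
          ContinuousLinearMap.apply_apply, map_smul, one_apply_eq_self,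
          Representation.toCLM_apply, coe_innerSL_apply, smul_eq_mul]
        ring

/-- **Convolution of matrix coefficients of a single irreducible representation.**
For an irreducible continuous unitary representation `ρ` of a compact Hausdorff
group `G` on `V`, and the normalized Haar probability measure `μ`,
`∫ ⟨u, ρ(g h) v⟩ · ⟨w, ρ(h⁻¹) x⟩ dμ(h) = ⟨w, v⟩ · ⟨u, ρ(g) x⟩ / dim V`
for all `u, v, w, x ∈ V` and `g ∈ G`. -/
theorem matrix_coeff_convolution_same {G : Type*} [Group G] [TopologicalSpace G]
    [IsTopologicalGroup G] [CompactSpace G] [T2Space G]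
    [MeasurableSpace G] [BorelSpace G]
    (μ : Measure G) [μ.IsHaarMeasure] [IsProbabilityMeasure μ]
    {V : Type*} [NormedAddCommGroup V] [InnerProductSpace ℂ V]
    [FiniteDimensional ℂ V] [Nontrivial V]
    (ρ : G →* (V →ₗ[ℂ] V))
    (hρ_unit : ∀ (g : G) (u v : V), (inner ℂ (ρ g u) (ρ g v) : ℂ) = inner ℂ u v)
    (hρ_cont : ∀ v : V, Continuous fun g : G => ρ g v)
    (hρ_irr : ∀ U : Submodule ℂ V,
      (∀ (g : G) (v : V), v ∈ U → ρ g v ∈ U) → U = ⊥ ∨ U = ⊤)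
    (u v w x : V) (g : G) :
    ∫ h, (inner ℂ u (ρ (g * h) v) : ℂ) * (inner ℂ w (ρ h⁻¹ x) : ℂ) ∂μ
      = (inner ℂ w v : ℂ) * (inner ℂ u (ρ g x) : ℂ) / (Module.finrank ℂ V : ℂ) :=
  matrix_coeff_convolution_same_general μ ρ hρ_cont hρ_irr u v w x g
end
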